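/- arXiv:1805.07337 — 5 statements merged into one kernel-verified Lean document; each statement's English description precedes it below -/
import Mathlib

section
/- Given the 1D ReLU loss h(a) = Σ_{i=1}^m (max(0, y_i - a·x_i))² with all x_i > 0 and distinct ratios r_i = y_i/x_i, the set of points where h is not three-times differentiable equals {r_1, …, r_m}; hence the set {y_i/x_i} is recoverable from h. -/
/-!
Write `q s = (max 0 s)²`, so that `h a = ∑ i, q (y i - a * x i)`. Away from `0` the function `q` is
locally `0` or `s²`, hence smooth; at `0` it is `C¹` with derivative `2 max 0 s`, which has a corner,
so `q` is not even `C²` there. Reparametrizing by the affine bijection `a ↦ y i - a * x i`, the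
`i`-th term of `h` is smooth except at its kink `y i / x i`, where it is not `C²`. The kinks being
distinct, near `y j / x j` all the other terms are smooth, so `h` fails to be `C³` there.
-/

open Filter Topology Asymptotics

theorem hasDerivAt_sq_max_zero (t : ℝ) :
    HasDerivAt (fun s : ℝ => max 0 s ^ 2) (2 * max 0 t) t := by
  rcases lt_trichotomy t 0 with ht | rfl | ht
  · have hzero : (fun s : ℝ => max 0 s ^ 2) =ᶠ[𝓝 t] fun _ => 0 := by
      filter_upwards [eventually_lt_nhds ht] with s hs
      simp [max_eq_left hs.le]
    simpa [max_eq_left ht.le] using (hasDerivAt_const t (0 : ℝ)).congr_of_eventuallyEq hzero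
  · have hbound : (fun s : ℝ => max 0 s ^ 2) =O[𝓝 0] fun s => s ^ 2 :=
      isBigO_of_le _ fun s => by
        simp only [norm_pow, Real.norm_eq_abs]
        refine pow_le_pow_left₀ (abs_nonneg _) ?_ 2
        rw [abs_of_nonneg (le_max_left 0 s)]
        exact max_le (abs_nonneg s) (le_abs_self s)
    rw [hasDerivAt_iff_isLittleO]
    simpa using hbound.trans_isLittleO (isLittleO_pow_id one_lt_two)
  · have hsq : (fun s : ℝ => max 0 s ^ 2) =ᶠ[𝓝 t] fun s => s ^ 2 := by
      filter_upwards [eventually_gt_nhds ht] with s hs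
      rw [max_eq_right hs.le]
    simpa [max_eq_right ht.le, mul_comm] using (hasDerivAt_pow 2 t).congr_of_eventuallyEq hsq

theorem contDiffAt_sq_max_zero {n : WithTop ℕ∞} {t : ℝ} (ht : t ≠ 0) :
    ContDiffAt ℝ n (fun s : ℝ => max 0 s ^ 2) t := by
  rcases ht.lt_or_gt with ht | ht
  · refine contDiffAt_const (c := (0 : ℝ)).congr_of_eventuallyEq ?_
    filter_upwards [eventually_lt_nhds ht] with s hs
    simp [max_eq_left hs.le]
  · refine (contDiffAt_id.pow 2).congr_of_eventuallyEq ?_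
    filter_upwards [eventually_gt_nhds ht] with s hs
    simp [max_eq_right hs.le]

theorem not_differentiableAt_max_zero : ¬ DifferentiableAt ℝ (fun s : ℝ => max 0 s) 0 := by
  intro h
  have habs : (fun s : ℝ => 2 * max 0 s - s) = abs := by
    funext s
    rcases le_total 0 s with hs | hs
    · rw [max_eq_right hs, abs_of_nonneg hs]; ring
    · rw [max_eq_left hs, abs_of_nonpos hs]; ring
  exact not_differentiableAt_abs_zero (habs ▸ (h.const_mul 2).sub differentiableAt_id)

theorem not_contDiffAt_sq_max_zero {n : WithTop ℕ∞} (hn : 2 ≤ n) :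
    ¬ ContDiffAt ℝ n (fun s : ℝ => max 0 s ^ 2) 0 := by
  intro h
  have hderiv : deriv (fun s : ℝ => max 0 s ^ 2) = fun s => 2 * max 0 s :=
    funext fun t => (hasDerivAt_sq_max_zero t).deriv
  have hdiff : DifferentiableAt ℝ (fun s : ℝ => 2 * max 0 s) 0 :=
    hderiv ▸ (h.derivWithin (m := 1) hn).differentiableAt one_ne_zero
  refine not_differentiableAt_max_zero ?_
  simpa using hdiff.const_mul (1 / 2 : ℝ)

theorem contDiffAt_comp_const_sub_mul_iff {F : Type*} [NormedAddCommGroup F] [NormedSpace ℝ F]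
    {n : WithTop ℕ∞} {f : ℝ → F} {c k a₀ : ℝ} (hk : k ≠ 0) :
    ContDiffAt ℝ n (fun a => f (c - a * k)) a₀ ↔ ContDiffAt ℝ n f (c - a₀ * k) := by
  refine ⟨fun h => ?_, fun h => h.comp a₀ (by fun_prop)⟩
  have hinv : ContDiffAt ℝ n (fun s : ℝ => (c - s) / k) (c - a₀ * k) := by fun_prop
  have hpoint : (c - (c - a₀ * k)) / k = a₀ := by field_simp; ring
  rw [← hpoint] at h
  convert h.comp (c - a₀ * k) hinv using 1
  funext s
  simp only [Function.comp_apply]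
  congr 1
  field_simp
  ring

theorem contDiffAt_sq_max_zero_sub_mul {n : WithTop ℕ∞} {x y a₀ : ℝ} (hx : x ≠ 0)
    (ha₀ : a₀ ≠ y / x) : ContDiffAt ℝ n (fun a : ℝ => max 0 (y - a * x) ^ 2) a₀ := by
  refine (contDiffAt_comp_const_sub_mul_iff hx).2 (contDiffAt_sq_max_zero ?_)
  rw [sub_ne_zero]
  exact fun h => ha₀ ((eq_div_iff hx).2 h.symm)

theorem not_contDiffAt_sq_max_zero_sub_mul {n : WithTop ℕ∞} {x y : ℝ} (hx : x ≠ 0)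
    (hn : 2 ≤ n) : ¬ ContDiffAt ℝ n (fun a : ℝ => max 0 (y - a * x) ^ 2) (y / x) := by
  rw [contDiffAt_comp_const_sub_mul_iff (f := fun s => max 0 s ^ 2) hx, div_mul_cancel₀ y hx,
    sub_self]
  exact not_contDiffAt_sq_max_zero hn

theorem stmt_4 (m : ℕ) (x y : Fin m → ℝ) (hx : ∀ i, 0 < x i)
    (hdist : ∀ i j, y i / x i = y j / x j → i = j) :
    {a₀ : ℝ | ¬ ContDiffAt ℝ 3 (fun a : ℝ => ∑ i, max 0 (y i - a * x i) ^ 2) a₀}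
      = Set.range fun i => y i / x i := by
  ext a₀
  simp only [Set.mem_ofPred_eq, Set.mem_range]
  constructor
  · contrapose!
    exact fun hoff => ContDiffAt.sum fun i _ =>
      contDiffAt_sq_max_zero_sub_mul (hx i).ne' (hoff i).symm
  · rintro ⟨j, rfl⟩ h
    have hrest : ContDiffAt ℝ 3
        (fun a : ℝ => ∑ i ∈ Finset.univ.erase j, max 0 (y i - a * x i) ^ 2) (y j / x j) :=
      ContDiffAt.sum fun i hi => contDiffAt_sq_max_zero_sub_mul (hx i).ne'
        fun hij => Finset.ne_of_mem_erase hi (hdist i j hij.symm)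
    refine not_contDiffAt_sq_max_zero_sub_mul (n := 3) (y := y j) (hx j).ne' (by norm_num) ?_
    convert h.sub hrest using 1
    funext a
    rw [← Finset.add_sum_erase _ _ (Finset.mem_univ j), add_sub_cancel_right]
end

section
/- Let u = (w₁w₅x₁ + w₂w₆x₁ + w₃w₅x₂ + w₄w₆x₂)(w₇w₉ + w₈w₁₀) as a polynomial in the ten variables w₁,…,w₁₀ over ℝ, with fixed real constants x₁, x₂ not both zero. Then both factors w₁w₅x₁ + w₂w₆x₁ + w₃w₅x₂ + w₄w₆x₂ and w₇w₉ + w₈w₁₀ are irreducible in ℝ[w₁,…,w₁₀]. -/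
/-- A linear polynomial `C a * X + C b` with `a` irreducible, `a ≠ 0` and `a ∤ b`
is irreducible. -/
lemma lin_irred {R : Type*} [CommRing R] [IsDomain R] {a b : R} (ha : Irreducible a)
    (ha0 : a ≠ 0) (hab : ¬ a ∣ b) :
    Irreducible (Polynomial.C a * Polynomial.X + Polynomial.C b) := by
  have hdeg : (Polynomial.C a * Polynomial.X + Polynomial.C b).natDegree = 1 :=
    Polynomial.natDegree_linear ha0
  have key : ∀ f : Polynomial R, f ∣ (Polynomial.C a * Polynomial.X + Polynomial.C b) →
      f.natDegree = 0 → IsUnit f := by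
    intro f hf hf0
    obtain ⟨c, rfl⟩ := Polynomial.natDegree_eq_zero.mp hf0
    have hc : ∀ n, c ∣ (Polynomial.C a * Polynomial.X + Polynomial.C b).coeff n := by
      intro n
      obtain ⟨q, hq⟩ := hf
      exact ⟨q.coeff n, by rw [hq]; simp [Polynomial.coeff_C_mul]⟩
    have hca : c ∣ a := by simpa using hc 1
    have hcb : c ∣ b := by simpa using hc 0
    obtain ⟨d, hd⟩ := hca
    rcases ha.isUnit_or_isUnit hd with h | h
    · exact Polynomial.isUnit_C.mpr h
    · exfalso
      apply hab
      obtain ⟨u, hu⟩ := h.exists_left_inv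
      have hac : a * u = c := by
        rw [hd, mul_assoc, mul_comm d u, ← mul_assoc, mul_assoc, hu, mul_one]
      exact (hac ▸ (Dvd.dvd.mul_right (dvd_refl a) u)).trans hcb
  constructor
  · intro h
    have := Polynomial.natDegree_eq_zero_of_isUnit h
    omega
  · intro f g hfg
    have hne : Polynomial.C a * Polynomial.X + Polynomial.C b ≠ 0 := by
      intro h; rw [h] at hdeg; simp at hdeg
    have hf0 : f ≠ 0 := by rintro rfl; simp at hfg; exact hne hfg
    have hg0 : g ≠ 0 := by rintro rfl; simp at hfg; exact hne hfg
    have hsum : f.natDegree + g.natDegree = 1 := by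
      rw [← Polynomial.natDegree_mul hf0 hg0, ← hfg, hdeg]
    rcases Nat.eq_zero_or_pos f.natDegree with h | h
    · exact Or.inl (key f ⟨g, hfg⟩ h)
    · exact Or.inr (key g ⟨f, by rw [hfg, mul_comm]⟩ (by omega))

open MvPolynomial in
lemma irred_X_mv {n : ℕ} (i : Fin (n + 1)) :
    Irreducible (X i : MvPolynomial (Fin (n + 1)) ℝ) := by
  apply (MulEquiv.irreducible_iff
    ((renameEquiv ℝ (Equiv.swap i 0)).trans (finSuccEquiv ℝ n))).mp
  rw [show ((renameEquiv ℝ (Equiv.swap i 0)).trans (finSuccEquiv ℝ n)) (X i) = Polynomial.X by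
    simp [finSuccEquiv_X_zero]]
  exact Polynomial.irreducible_X

open MvPolynomial in
lemma not_dvd_aux {m : ℕ} {j k l : Fin m} (hjk : j ≠ k) (hjl : j ≠ l) :
    ¬ (X j : MvPolynomial (Fin m) ℝ) ∣ X k * X l := by
  intro h
  have h2 := map_dvd (aeval (fun t : Fin m => if t = j then (0:ℝ) else 1)) h
  simp [Ne.symm hjk, Ne.symm hjl] at h2

open MvPolynomial in
lemma quad0 {n : ℕ} (j k l : Fin (n + 1)) (hjk : j ≠ k) (hjl : j ≠ l) :
    Irreducible ((X 0 : MvPolynomial (Fin (n + 2)) ℝ) * X j.succ + X k.succ * X l.succ) := by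
  apply (MulEquiv.irreducible_iff (finSuccEquiv ℝ (n + 1))).mp
  rw [show (finSuccEquiv ℝ (n + 1))
      ((X 0 : MvPolynomial (Fin (n + 2)) ℝ) * X j.succ + X k.succ * X l.succ)
      = Polynomial.C (X j) * Polynomial.X + Polynomial.C (X k * X l) by
    rw [map_add, map_mul, map_mul, finSuccEquiv_X_zero, finSuccEquiv_X_succ, finSuccEquiv_X_succ,
      finSuccEquiv_X_succ, ← Polynomial.C_mul]
    ring]
  exact lin_irred (irred_X_mv j) (X_ne_zero j) (not_dvd_aux hjk hjl)

open MvPolynomial in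
theorem stmt_5 (x₁ x₂ : ℝ) (hx : (x₁, x₂) ≠ (0, 0)) :
    Irreducible (C x₁ * X 0 * X 4 + C x₁ * X 1 * X 5 + C x₂ * X 2 * X 4 + C x₂ * X 3 * X 5 :
      MvPolynomial (Fin 10) ℝ) ∧
    Irreducible (X 6 * X 8 + X 7 * X 9 : MvPolynomial (Fin 10) ℝ) := by
  constructor
  · rcases eq_or_ne x₁ 0 with rfl | hx1
    · -- x₁ = 0 : polynomial is C x₂ * (X 2 * X 4 + X 3 * X 5)
      have hx2 : x₂ ≠ 0 := by simpa using hx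
      rw [show (C (0:ℝ) * X 0 * X 4 + C (0:ℝ) * X 1 * X 5 + C x₂ * X 2 * X 4 + C x₂ * X 3 * X 5 :
          MvPolynomial (Fin 10) ℝ) = C x₂ * (X 2 * X 4 + X 3 * X 5) by rw [C_0]; ring]
      rw [irreducible_isUnit_mul ((isUnit_iff_ne_zero.mpr hx2).map C)]
      apply (MulEquiv.irreducible_iff (renameEquiv ℝ (Equiv.swap (2 : Fin 10) 0))).mp
      rw [show (renameEquiv ℝ (Equiv.swap (2 : Fin 10) 0))
          ((X 2 * X 4 + X 3 * X 5 : MvPolynomial (Fin 10) ℝ)) = X 0 * X 4 + X 3 * X 5 by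
        rw [renameEquiv_apply, map_add, map_mul, map_mul, rename_X, rename_X, rename_X, rename_X,
          show (Equiv.swap (2 : Fin 10) 0) 2 = 0 from by decide,
          show (Equiv.swap (2 : Fin 10) 0) 4 = 4 from by decide,
          show (Equiv.swap (2 : Fin 10) 0) 3 = 3 from by decide,
          show (Equiv.swap (2 : Fin 10) 0) 5 = 5 from by decide]]
      rw [show (4 : Fin 10) = Fin.succ (3 : Fin 9) from by decide,
        show (3 : Fin 10) = Fin.succ (2 : Fin 9) from by decide,
        show (5 : Fin 10) = Fin.succ (4 : Fin 9) from by decide]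
      exact quad0 (3 : Fin 9) 2 4 (by decide) (by decide)
    · -- x₁ ≠ 0 : linear in X 0
      apply (MulEquiv.irreducible_iff (finSuccEquiv ℝ 9)).mp
      have hC : ∀ r : ℝ, (finSuccEquiv ℝ 9) (C r) = Polynomial.C (C r) := fun r => by
        simp [finSuccEquiv_apply]
      rw [show (finSuccEquiv ℝ 9) (C x₁ * X 0 * X 4 + C x₁ * X 1 * X 5 + C x₂ * X 2 * X 4 +
          C x₂ * X 3 * X 5 : MvPolynomial (Fin 10) ℝ)
          = Polynomial.C (X 3 * C x₁) * Polynomial.X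
            + Polynomial.C (C x₁ * X 0 * X 4 + C x₂ * X 1 * X 3 + C x₂ * X 2 * X 4) by
        rw [show (4 : Fin 10) = Fin.succ (3 : Fin 9) from by decide,
          show (1 : Fin 10) = Fin.succ (0 : Fin 9) from by decide,
          show (5 : Fin 10) = Fin.succ (4 : Fin 9) from by decide,
          show (2 : Fin 10) = Fin.succ (1 : Fin 9) from by decide,
          show (3 : Fin 10) = Fin.succ (2 : Fin 9) from by decide]
        simp only [map_add, map_mul, finSuccEquiv_X_zero, finSuccEquiv_X_succ, hC]
        ring]
      apply lin_irred
      · rw [irreducible_mul_isUnit ((isUnit_iff_ne_zero.mpr hx1).map C)]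
        exact irred_X_mv (3 : Fin 9)
      · exact mul_ne_zero (X_ne_zero _) (by simpa using hx1)
      · intro h
        have h3 : (X 3 : MvPolynomial (Fin 9) ℝ) ∣
            C x₁ * X 0 * X 4 + C x₂ * X 1 * X 3 + C x₂ * X 2 * X 4 :=
          dvd_trans (dvd_mul_right (X 3) (C x₁)) h
        have h2 := map_dvd (aeval (fun t : Fin 9 => if t = 0 ∨ t = 4 then (1:ℝ) else 0)) h3
        simp at h2
        exact hx1 h2
  · apply (MulEquiv.irreducible_iff (renameEquiv ℝ (Equiv.swap (6 : Fin 10) 0))).mp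
    rw [show (renameEquiv ℝ (Equiv.swap (6 : Fin 10) 0))
        ((X 6 * X 8 + X 7 * X 9 : MvPolynomial (Fin 10) ℝ)) = X 0 * X 8 + X 7 * X 9 by
      rw [renameEquiv_apply, map_add, map_mul, map_mul, rename_X, rename_X, rename_X, rename_X,
        show (Equiv.swap (6 : Fin 10) 0) 6 = 0 from by decide,
        show (Equiv.swap (6 : Fin 10) 0) 8 = 8 from by decide,
        show (Equiv.swap (6 : Fin 10) 0) 7 = 7 from by decide,
        show (Equiv.swap (6 : Fin 10) 0) 9 = 9 from by decide]]
    rw [show (8 : Fin 10) = Fin.succ (7 : Fin 9) from by decide,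
      show (7 : Fin 10) = Fin.succ (6 : Fin 9) from by decide,
      show (9 : Fin 10) = Fin.succ (8 : Fin 9) from by decide]
    exact quad0 (7 : Fin 9) 6 8 (by decide) (by decide)
end

section
/- A polynomial of the form Σ_{i=1}^m Σ_{j=1}^n c_{ij} w_i v_j in disjoint variables, whose coefficient matrix (c_{ij}) has rank ≥ 2, is irreducible in ℝ[w_1,…,w_m,v_1,…,v_n]. -/
/-!
A nonzero quadratic form over a field that factors nontrivially is a product of two linear forms
`ℓ₁ * ℓ₂`: both factors have total degree one, and the degree-two component of the product is the
product of their degree-one components. If `∑ c i j * w i * v j = ℓ₁ * ℓ₂`, setting `v = 0` shows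
that the `w`-parts of `ℓ₁` and `ℓ₂` have identically vanishing product, so one of them, say that
of `ℓ₁`, is zero. Writing `ℓ₁ = ∑ β j * v j` and `ℓ₂ = ∑ γ i * w i + ∑ δ j * v j`, comparing the
coefficients of `w i * v j` gives `c i j = γ i * β j`, so `c` has rank at most one.
-/

open MvPolynomial

namespace MvPolynomial

variable {σ R : Type*} [CommSemiring R]

lemma sum_homogeneousComponent_of_totalDegree_le {φ : MvPolynomial σ R} {a : ℕ}
    (h : φ.totalDegree ≤ a) :
    ∑ i ∈ Finset.range (a + 1), homogeneousComponent i φ = φ := by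
  rw [← Finset.sum_subset (Finset.range_subset_range.2 (Nat.succ_le_succ h)),
    sum_homogeneousComponent]
  intro i _ hi
  rw [Finset.mem_range] at hi
  exact homogeneousComponent_eq_zero _ _ (by omega)

lemma homogeneousComponent_add_mul_of_totalDegree_le {f g : MvPolynomial σ R} {a b : ℕ}
    (hf : f.totalDegree ≤ a) (hg : g.totalDegree ≤ b) :
    homogeneousComponent (a + b) (f * g) =
      homogeneousComponent a f * homogeneousComponent b g := by
  have key : ∀ i ∈ Finset.range (a + 1), ∀ j ∈ Finset.range (b + 1),
      homogeneousComponent (a + b) (homogeneousComponent i f * homogeneousComponent j g) =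
        if i = a then if j = b then homogeneousComponent a f * homogeneousComponent b g
          else 0 else 0 := by
    intro i hi j hj
    rw [homogeneousComponent_of_mem ((homogeneousComponent_isHomogeneous i f).mul
      (homogeneousComponent_isHomogeneous j g))]
    rw [Finset.mem_range] at hi hj
    by_cases hij : i = a ∧ j = b
    · obtain ⟨rfl, rfl⟩ := hij
      simp
    · rw [if_neg (by omega)]
      split_ifs <;> simp_all
  conv_lhs => rw [← sum_homogeneousComponent_of_totalDegree_le hf,
    ← sum_homogeneousComponent_of_totalDegree_le hg, Finset.sum_mul_sum]
  simp only [map_sum]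
  rw [Finset.sum_congr rfl fun i hi => Finset.sum_congr rfl fun j hj => key i hi j hj]
  simp

lemma exists_eval_eq_dotProduct_of_isHomogeneous_one [Fintype σ] {f : MvPolynomial σ R}
    (hf : f.IsHomogeneous 1) : ∃ a : σ → R, ∀ x, eval x f = a ⬝ᵥ x := by
  rw [← mem_homogeneousSubmodule, homogeneousSubmodule_one_eq_span_X] at hf
  obtain ⟨a, rfl⟩ := (Submodule.mem_span_range_iff_exists_fun R).1 hf
  exact ⟨a, fun x => by simp [dotProduct, smul_eval]⟩

open Matrix in
lemma eval_sumElim_sum_C_mul_X_mul_X {ι κ : Type*} [Fintype ι] [Fintype κ]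
    (c : Matrix ι κ R) (y : ι → R) (z : κ → R) :
    eval (Sum.elim y z) (∑ i, ∑ j, C (c i j) * X (Sum.inl i) * X (Sum.inr j)) =
      y ⬝ᵥ c *ᵥ z := by
  simp only [map_sum, map_mul, eval_C, eval_X, Sum.elim_inl, Sum.elim_inr, dotProduct,
    Matrix.mulVec, Finset.mul_sum]
  exact Finset.sum_congr rfl fun i _ => Finset.sum_congr rfl fun j _ => by ring

lemma isHomogeneous_sum_C_mul_X_mul_X {ι κ : Type*} [Fintype ι] [Fintype κ]
    (c : Matrix ι κ R) :
    (∑ i, ∑ j, C (c i j) * X (Sum.inl i) * X (Sum.inr j) :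
      MvPolynomial (ι ⊕ κ) R).IsHomogeneous 2 :=
  IsHomogeneous.sum _ _ _ fun i _ => IsHomogeneous.sum _ _ _ fun j _ =>
    (isHomogeneous_C_mul_X (c i j) (Sum.inl i)).mul (isHomogeneous_X R (Sum.inr j))

variable {K : Type*} [Field K]

lemma totalDegree_ne_zero_of_not_isUnit {q : MvPolynomial σ K} (hq : q ≠ 0) (hu : ¬IsUnit q) :
    q.totalDegree ≠ 0 := by
  intro h
  rw [totalDegree_eq_zero_iff_eq_C.mp h] at hq hu
  exact hu ((Ne.isUnit fun h0 => hq (by rw [h0, map_zero])).map C)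

lemma irreducible_of_isHomogeneous_two {p : MvPolynomial σ K} (hp : p.IsHomogeneous 2)
    (hp0 : p ≠ 0)
    (h : ∀ f g : MvPolynomial σ K, f.IsHomogeneous 1 → g.IsHomogeneous 1 → p ≠ f * g) :
    Irreducible p := by
  have hdeg : p.totalDegree = 2 := hp.totalDegree hp0
  refine ⟨fun hu => ?_, fun f g hfg => ?_⟩
  · have := (isUnit_iff_totalDegree_of_isReduced.1 hu).2
    omega
  by_contra! hu
  have hf0 : f ≠ 0 := by rintro rfl; exact hp0 (by rw [hfg, zero_mul])
  have hg0 : g ≠ 0 := by rintro rfl; exact hp0 (by rw [hfg, mul_zero])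
  have hsum : f.totalDegree + g.totalDegree = 2 := by
    rw [← totalDegree_mul_of_isDomain hf0 hg0, ← hfg, hdeg]
  have hf_deg := totalDegree_ne_zero_of_not_isUnit hf0 hu.1
  have hg_deg := totalDegree_ne_zero_of_not_isUnit hg0 hu.2
  refine h _ _ (homogeneousComponent_isHomogeneous 1 f) (homogeneousComponent_isHomogeneous 1 g) ?_
  rw [← homogeneousComponent_eq_self hp, hfg]
  exact homogeneousComponent_add_mul_of_totalDegree_le (a := 1) (b := 1) (by omega) (by omega)

end MvPolynomial

lemma eq_zero_or_eq_zero_of_dotProduct_mul_dotProduct_eq_zero {ι R : Type*} [Fintype ι]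
    [DecidableEq ι] [CommRing R] [NoZeroDivisors R] {α γ : ι → R}
    (h : ∀ y, (α ⬝ᵥ y) * (γ ⬝ᵥ y) = 0) : α = 0 ∨ γ = 0 := by
  by_contra! hne
  simp only [ne_eq, funext_iff, Pi.zero_apply, not_forall] at hne
  obtain ⟨⟨i, hi⟩, ⟨i', hi'⟩⟩ := hne
  have hγi : γ i = 0 := by simpa [hi] using h (Pi.single i 1)
  have hαi' : α i' = 0 := by simpa [hi'] using h (Pi.single i' 1)
  have := h (Pi.single i 1 + Pi.single i' 1)
  rw [dotProduct_add, dotProduct_add] at this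
  simp [hi, hi', hγi, hαi'] at this

namespace Matrix

variable {ι κ K : Type*} [Fintype ι] [Fintype κ] [DecidableEq ι] [DecidableEq κ] [Field K]

lemma rank_le_one_of_dotProduct_mulVec_eq_mul {c : Matrix ι κ K} {α γ : ι → K} {β δ : κ → K}
    (h : ∀ y z, y ⬝ᵥ c *ᵥ z = (α ⬝ᵥ y + β ⬝ᵥ z) * (γ ⬝ᵥ y + δ ⬝ᵥ z)) : c.rank ≤ 1 := by
  have hβδ : ∀ j, β j * δ j = 0 := fun j => by simpa using (h 0 (Pi.single j 1)).symm
  have hc : ∀ i j, c i j = (α i + β j) * (γ i + δ j) := fun i j => by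
    simpa using h (Pi.single i 1) (Pi.single j 1)
  rcases eq_zero_or_eq_zero_of_dotProduct_mul_dotProduct_eq_zero (α := α) (γ := γ)
    (fun y => by simpa only [dotProduct_zero, mulVec_zero, add_zero] using (h y 0).symm)
    with rfl | rfl
  · convert rank_vecMulVec_le γ β
    ext i j
    rw [vecMulVec_apply, hc, Pi.zero_apply]
    linear_combination hβδ j
  · convert rank_vecMulVec_le α δ
    ext i j
    rw [vecMulVec_apply, hc, Pi.zero_apply]
    linear_combination hβδ j

end Matrix

open Matrix in
lemma MvPolynomial.rank_le_one_of_sum_C_mul_X_mul_X_eq_mul {ι κ K : Type*} [Fintype ι]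
    [Fintype κ] [DecidableEq ι] [DecidableEq κ] [Field K] {c : Matrix ι κ K}
    {f g : MvPolynomial (ι ⊕ κ) K} (hf : f.IsHomogeneous 1) (hg : g.IsHomogeneous 1)
    (h : ∑ i, ∑ j, C (c i j) * X (Sum.inl i) * X (Sum.inr j) = f * g) : c.rank ≤ 1 := by
  obtain ⟨a, ha⟩ := exists_eval_eq_dotProduct_of_isHomogeneous_one hf
  obtain ⟨b, hb⟩ := exists_eval_eq_dotProduct_of_isHomogeneous_one hg
  refine rank_le_one_of_dotProduct_mulVec_eq_mul (α := a ∘ Sum.inl) (β := a ∘ Sum.inr)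
    (γ := b ∘ Sum.inl) (δ := b ∘ Sum.inr) fun y z => ?_
  rw [← eval_sumElim_sum_C_mul_X_mul_X, h, map_mul, ha, hb, ← Sum.elim_comp_inl_inr a,
    ← Sum.elim_comp_inl_inr b, sumElim_dotProduct_sumElim, sumElim_dotProduct_sumElim]
  simp

theorem stmt_11 (m n : ℕ) (c : Matrix (Fin m) (Fin n) ℝ) (hrank : 2 ≤ c.rank) :
    Irreducible (∑ i, ∑ j, C (c i j) * X (Sum.inl i) * X (Sum.inr j) :
      MvPolynomial (Fin m ⊕ Fin n) ℝ) := by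
  refine irreducible_of_isHomogeneous_two (isHomogeneous_sum_C_mul_X_mul_X c) (fun h0 => ?_)
    fun f g hf hg hfg => ?_
  · -- `0 = 0 * 0` is a product of linear forms
    have := rank_le_one_of_sum_C_mul_X_mul_X_eq_mul (isHomogeneous_zero _ _ 1)
      (isHomogeneous_zero _ _ 1) (by rw [h0, zero_mul])
    omega
  · have := rank_le_one_of_sum_C_mul_X_mul_X_eq_mul hf hg hfg
    omega
end

section
/- Let f : ℝ^N → ℝ be continuous and suppose U ⊆ ℝ^N is open, p : ℝ^N → ℝ is a polynomial, and f agrees with polynomials f₊ on U ∩ {p ≥ 0} and f₋ on U ∩ {p ≤ 0}. If f is smooth (C^∞) at a point w₀ ∈ U with p(w₀) = 0 and ∇p(w₀) ≠ 0, then f₊ = f₋ as polynomial functions on some neighborhood of w₀. -/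
open MvPolynomial

lemma eval_update_hasDerivAt {N : ℕ} (i : Fin N) (w₀ : Fin N → ℝ)
    (q : MvPolynomial (Fin N) ℝ) :
    HasDerivAt (fun t : ℝ => eval (Function.update w₀ i (w₀ i + t)) q)
      (eval w₀ (pderiv i q)) 0 := by
  induction q using MvPolynomial.induction_on with
  | C a => simpa using hasDerivAt_const (0:ℝ) (a:ℝ)
  | add q r hq hr => simpa [mul_comm] using hq.fun_add hr
  | mul_X q j hq =>
    have h2 : HasDerivAt (fun t : ℝ => Function.update w₀ i (w₀ i + t) j)
        (if j = i then 1 else 0) 0 := by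
      by_cases h : j = i
      · subst h
        simp only [Function.update_self, if_pos rfl]
        exact (hasDerivAt_id (0:ℝ)).const_add (w₀ j)
      · simp only [Function.update_of_ne h, if_neg h]
        exact hasDerivAt_const _ _
    have := hq.fun_mul h2
    simp only [add_zero, Function.update_eq_self] at this
    convert this using 1
    · rfl
    · rfl
    · funext t; simp
    · by_cases h : j = i
      · subst h; simp [pderiv_mul, pderiv_X_self]; ring
      · simp [pderiv_mul, pderiv_X_of_ne h, h, mul_comm]

/-- If ψ has nonzero derivative at 0 with ψ 0 = 0, then ψ takes positive values
arbitrarily close to 0. -/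
lemma exists_pos_of_hasDerivAt {ψ : ℝ → ℝ} {d : ℝ} (hψ : HasDerivAt ψ d 0)
    (h0 : ψ 0 = 0) (hd : 0 < d) {V : Set ℝ} (hV : V ∈ nhds 0) :
    ∃ t ∈ V, 0 < ψ t := by
  have hslope := hasDerivAt_iff_tendsto_slope.1 hψ
  have ev1 : ∀ᶠ t in nhdsWithin 0 {(0:ℝ)}ᶜ, 0 < slope ψ 0 t :=
    hslope.eventually (eventually_gt_nhds hd)
  have ev1' : ∀ᶠ t in nhdsWithin 0 (Set.Ioi 0), 0 < slope ψ 0 t :=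
    ev1.filter_mono (nhdsWithin_mono 0 (fun t ht => ne_of_gt ht))
  have ev2 : ∀ᶠ t in nhdsWithin 0 (Set.Ioi 0), t ∈ V :=
    eventually_nhdsWithin_of_eventually_nhds hV
  have ev3 : ∀ᶠ t in nhdsWithin 0 (Set.Ioi 0), (0:ℝ) < t :=
    eventually_mem_nhdsWithin
  obtain ⟨t, h1, h2, h3⟩ := (ev1'.and (ev2.and ev3)).exists
  refine ⟨t, h2, ?_⟩
  have hs : slope ψ 0 t = ψ t / t := by
    simp [slope_def_field, h0]
  rw [hs] at h1
  have := mul_pos h1 h3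
  rwa [div_mul_cancel₀ _ (ne_of_gt h3)] at this

lemma exists_neg_of_hasDerivAt {ψ : ℝ → ℝ} {d : ℝ} (hψ : HasDerivAt ψ d 0)
    (h0 : ψ 0 = 0) (hd : 0 < d) {V : Set ℝ} (hV : V ∈ nhds 0) :
    ∃ t ∈ V, ψ t < 0 := by
  have hslope := hasDerivAt_iff_tendsto_slope.1 hψ
  have ev1 : ∀ᶠ t in nhdsWithin 0 {(0:ℝ)}ᶜ, 0 < slope ψ 0 t :=
    hslope.eventually (eventually_gt_nhds hd)
  have ev1' : ∀ᶠ t in nhdsWithin 0 (Set.Iio 0), 0 < slope ψ 0 t :=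
    ev1.filter_mono (nhdsWithin_mono 0 (fun t ht => ne_of_lt ht))
  have ev2 : ∀ᶠ t in nhdsWithin 0 (Set.Iio 0), t ∈ V :=
    eventually_nhdsWithin_of_eventually_nhds hV
  have ev3 : ∀ᶠ t in nhdsWithin 0 (Set.Iio 0), t < (0:ℝ) :=
    eventually_mem_nhdsWithin
  obtain ⟨t, h1, h2, h3⟩ := (ev1'.and (ev2.and ev3)).exists
  refine ⟨t, h2, ?_⟩
  have hs : slope ψ 0 t = ψ t / t := by
    simp [slope_def_field, h0]
  rw [hs] at h1
  have := mul_neg_of_pos_of_neg h1 h3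
  rwa [div_mul_cancel₀ _ (ne_of_lt h3)] at this

theorem stmt_14 (N : ℕ) (f : (Fin N → ℝ) → ℝ) (hf : Continuous f)
    (U : Set (Fin N → ℝ)) (hU : IsOpen U) (p fplus fminus : MvPolynomial (Fin N) ℝ)
    (hplus : ∀ w ∈ U, 0 ≤ eval w p → f w = eval w fplus)
    (hminus : ∀ w ∈ U, eval w p ≤ 0 → f w = eval w fminus)
    (w₀ : Fin N → ℝ) (hw₀ : w₀ ∈ U) (hsmooth : ContDiffAt ℝ (⊤ : ℕ∞) f w₀)
    (hp0 : eval w₀ p = 0) (hgrad : ∃ i, eval w₀ (pderiv i p) ≠ 0) :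
    ∃ V ∈ nhds w₀, ∀ w ∈ V, eval w fplus = eval w fminus := by
  classical
  obtain ⟨i, hd⟩ := hgrad
  -- the curve through w₀ in direction e_i
  set c : ℝ → (Fin N → ℝ) := fun t => Function.update w₀ i (w₀ i + t) with hc
  have hcont : Continuous c := by
    apply continuous_const.update i
    exact continuous_const.add continuous_id
  have hc0 : c 0 = w₀ := by simp [hc]
  set ψ : ℝ → ℝ := fun t => eval (c t) p with hψdef
  have hψ : HasDerivAt ψ (eval w₀ (pderiv i p)) 0 := eval_update_hasDerivAt i w₀ p
  have hψ0 : ψ 0 = 0 := by rw [hψdef]; simp [hc0, hp0]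
  -- density of both signs near w₀
  have hdense : ∀ V ∈ nhds w₀, (∃ w ∈ V, 0 < eval w p) ∧ (∃ w ∈ V, eval w p < 0) := by
    intro V hV
    have hVc : c ⁻¹' V ∈ nhds (0:ℝ) := by
      have := hcont.continuousAt (x := (0:ℝ))
      rw [ContinuousAt, hc0] at this
      exact this hV
    rcases hd.lt_or_gt with h | h
    · -- derivative negative: use -ψ
      have hψ' : HasDerivAt (fun t => -ψ t) (-(eval w₀ (pderiv i p))) 0 := hψ.neg
      have h0' : -ψ 0 = 0 := by rw [hψ0, neg_zero]
      obtain ⟨t1, ht1, hpos1⟩ := exists_neg_of_hasDerivAt hψ' h0' (by linarith) hVc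
      obtain ⟨t2, ht2, hpos2⟩ := exists_pos_of_hasDerivAt hψ' h0' (by linarith) hVc
      exact ⟨⟨c t1, ht1, by simpa using hpos1⟩, ⟨c t2, ht2, by simpa using hpos2⟩⟩
    · obtain ⟨t1, ht1, hpos1⟩ := exists_pos_of_hasDerivAt hψ hψ0 h hVc
      obtain ⟨t2, ht2, hpos2⟩ := exists_neg_of_hasDerivAt hψ hψ0 h hVc
      exact ⟨⟨c t1, ht1, hpos1⟩, ⟨c t2, ht2, hpos2⟩⟩
  -- general lemma: derivatives of f at w₀ match those of a polynomial g
  -- that agrees with f on an open set S accumulating at w₀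
  have main : ∀ (g : MvPolynomial (Fin N) ℝ) (S : Set (Fin N → ℝ)), IsOpen S →
      (∀ w ∈ S, f w = eval w g) → (∀ V ∈ nhds w₀, ∃ w ∈ V, w ∈ S) →
      ∀ n : ℕ, iteratedFDeriv ℝ n f w₀ = iteratedFDeriv ℝ n (fun w => eval w g) w₀ := by
    intro g S hS hfg hSd n
    set G : (Fin N → ℝ) → ℝ := fun w => eval w g with hG
    have hGa : ∀ x, AnalyticAt ℝ G x := fun x =>
      AnalyticOnNhd.eval_mvPolynomial g x (Set.mem_univ x)
    have hGc : ContDiff ℝ (n : WithTop ℕ∞) G :=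
      contDiff_iff_contDiffAt.2 fun x => (hGa x).contDiffAt.of_le le_top
    -- smoothness neighborhood
    obtain ⟨u, hu, hfu⟩ : ∃ u ∈ nhds w₀, ContDiffOn ℝ (n+1 : ℕ) f u :=
      hsmooth.contDiffOn (by exact_mod_cast le_top) (by simp)
    set T := interior u with hT
    have hTopen : IsOpen T := isOpen_interior
    have hw₀T : w₀ ∈ T := mem_interior_iff_mem_nhds.2 hu
    have hfT : ContDiffOn ℝ (n+1 : ℕ) f T := hfu.mono interior_subset
    -- continuity of n-th derivative of f on T
    have hcontd : ContinuousOn (iteratedFDeriv ℝ n f) T := by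
      have h1 : ContinuousOn (iteratedFDerivWithin ℝ n f T) T :=
        hfT.continuousOn_iteratedFDerivWithin (by exact_mod_cast Nat.le_succ n)
          hTopen.uniqueDiffOn
      exact h1.congr fun x hx => (iteratedFDerivWithin_of_isOpen n hTopen hx).symm
    -- w₀ accumulates S ∩ T
    have hclos : w₀ ∈ closure (S ∩ T) := by
      rw [mem_closure_iff_nhds]
      intro V hV
      obtain ⟨w, hw1, hw2⟩ := hSd (V ∩ T) (Filter.inter_mem hV (hTopen.mem_nhds hw₀T))
      exact ⟨w, hw1.1, hw2, hw1.2⟩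
    have hne : (nhdsWithin w₀ (S ∩ T)).NeBot := mem_closure_iff_nhdsWithin_neBot.1 hclos
    have heq : ∀ x ∈ S ∩ T, iteratedFDeriv ℝ n f x = iteratedFDeriv ℝ n G x := by
      intro x hx
      have hev : f =ᶠ[nhds x] G :=
        Filter.eventuallyEq_of_mem ((hS.inter hTopen).mem_nhds hx) (fun y hy => hfg y hy.1)
      rw [← iteratedFDerivWithin_univ, ← iteratedFDerivWithin_univ]
      exact (hev.filter_mono nhdsWithin_le_nhds).iteratedFDerivWithin_eq hev.self_of_nhds n
    have t1 : Filter.Tendsto (iteratedFDeriv ℝ n f) (nhdsWithin w₀ (S ∩ T))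
        (nhds (iteratedFDeriv ℝ n f w₀)) :=
      (hcontd w₀ hw₀T).mono Set.inter_subset_right
    have t2 : Filter.Tendsto (iteratedFDeriv ℝ n G) (nhdsWithin w₀ (S ∩ T))
        (nhds (iteratedFDeriv ℝ n G w₀)) :=
      ((hGc.continuous_iteratedFDeriv (le_refl _)).tendsto w₀).mono_left nhdsWithin_le_nhds
    have t1' : Filter.Tendsto (iteratedFDeriv ℝ n G) (nhdsWithin w₀ (S ∩ T))
        (nhds (iteratedFDeriv ℝ n f w₀)) := by
      refine t1.congr' ?_
      filter_upwards [self_mem_nhdsWithin] with x hx using heq x hx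
    exact tendsto_nhds_unique t1' t2
  -- continuity of polynomial evaluation
  have hpc : Continuous (fun w : Fin N → ℝ => eval w p) := continuous_iff_continuousAt.2
    (fun x => (AnalyticOnNhd.eval_mvPolynomial p x (Set.mem_univ x)).continuousAt)
  have keyplus := main fplus (U ∩ {w | 0 < eval w p})
    (hU.inter (isOpen_lt continuous_const hpc))
    (fun w hw => hplus w hw.1 (le_of_lt hw.2))
    (fun V hV => by
      obtain ⟨w, hw, hp'⟩ := (hdense (V ∩ U)
        (Filter.inter_mem hV (hU.mem_nhds hw₀))).1
      exact ⟨w, hw.1, hw.2, hp'⟩)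
  have keyminus := main fminus (U ∩ {w | eval w p < 0})
    (hU.inter (isOpen_lt hpc continuous_const))
    (fun w hw => hminus w hw.1 (le_of_lt hw.2))
    (fun V hV => by
      obtain ⟨w, hw, hp'⟩ := (hdense (V ∩ U)
        (Filter.inter_mem hV (hU.mem_nhds hw₀))).2
      exact ⟨w, hw.1, hw.2, hp'⟩)
  -- all iterated derivatives of the difference vanish at w₀
  have hzero : ∀ (n : ℕ) (y : Fin N → ℝ),
      iteratedFDeriv ℝ n (fun w => eval w fplus - eval w fminus) w₀ (fun _ => y) = 0 := by
    intro n y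
    have hcp : ContDiff ℝ (n : ℕ) (fun w : Fin N → ℝ => eval w fplus) :=
      contDiff_iff_contDiffAt.2 fun x =>
        (AnalyticOnNhd.eval_mvPolynomial fplus x (Set.mem_univ x)).contDiffAt.of_le le_top
    have hcm : ContDiff ℝ (n : ℕ) (fun w : Fin N → ℝ => eval w fminus) :=
      contDiff_iff_contDiffAt.2 fun x =>
        (AnalyticOnNhd.eval_mvPolynomial fminus x (Set.mem_univ x)).contDiffAt.of_le le_top
    have hsplit : (fun w : Fin N → ℝ => eval w fplus - eval w fminus)
        = fun w : Fin N → ℝ => eval w fplus + -(eval w fminus) := by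
      funext w; ring
    rw [hsplit, iteratedFDeriv_add_apply' hcp.contDiffAt hcm.neg.contDiffAt]
    have hneg : iteratedFDeriv ℝ n (fun w : Fin N → ℝ => -(eval w fminus)) w₀
        = -iteratedFDeriv ℝ n (fun w : Fin N → ℝ => eval w fminus) w₀ :=
      iteratedFDeriv_neg_apply
    rw [hneg, ← keyplus n, ← keyminus n]
    simp
  -- power series of the difference
  have hana : AnalyticAt ℝ (fun w => eval w fplus - eval w fminus) w₀ :=
    (AnalyticOnNhd.eval_mvPolynomial fplus w₀ (Set.mem_univ _)).sub
      (AnalyticOnNhd.eval_mvPolynomial fminus w₀ (Set.mem_univ _))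
  obtain ⟨q, hq⟩ := hana
  obtain ⟨r, hr⟩ := hq
  refine ⟨Metric.eball w₀ r, Metric.eball_mem_nhds w₀ hr.r_pos, ?_⟩
  intro w hw
  have hy : w - w₀ ∈ Metric.eball (0 : Fin N → ℝ) r := by
    rw [Metric.mem_eball] at hw ⊢
    have h1 : edist (w - w₀) (0 : Fin N → ℝ) = edist w w₀ := by
      rw [← sub_self w₀, edist_sub_right]
    rwa [h1]
  have H := hr.hasSum_iteratedFDeriv hy
  have H0 : HasSum (fun n : ℕ => ((n.factorial : ℝ))⁻¹ •
      iteratedFDeriv ℝ n (fun w => eval w fplus - eval w fminus) w₀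
        (fun _ => w - w₀)) 0 := by
    convert hasSum_zero with n
    rw [hzero n, smul_zero]
  have hval := H.unique H0
  have hww : w₀ + (w - w₀) = w := by abel
  rw [hww] at hval
  exact sub_eq_zero.1 hval
end

section
/- Let u ∈ ℝ[w] be a nonzero polynomial that is multihomogeneous of multidegree (1,1,…,1) ∈ ℤ^{L-1} with respect to a grading partitioning the variables into L-1 groups (group k has degree e_k). If u = g₁·g₂ with g₁, g₂ non-constant, then there exists a partition of {1,…,L-1} into two nonempty consecutive-or-not sets A, B such that g₁ is multihomogeneous of degree Σ_{k∈A} e_k and g₂ of degree Σ_{k∈B} e_k; in particular each variable group appears in exactly one factor. -/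
open MvPolynomial


/-- The multidegree of a monomial exponent `d`. -/
def mdeg {σ : Type*} [Fintype σ] {k : ℕ} (w : σ → Fin k → ℤ) (d : σ →₀ ℕ) : Fin k → ℤ :=
  ∑ v : σ, (d v : ℤ) • w v

/-- `f` is multihomogeneous of multidegree `D` with respect to the grading `w`. -/
def IsMultiHom {σ : Type*} [Fintype σ] {k : ℕ} (w : σ → Fin k → ℤ)
    (f : MvPolynomial σ ℝ) (D : Fin k → ℤ) : Prop :=
  ∀ d ∈ f.support, mdeg w d = D

section
variable {σ : Type*} [Fintype σ] (W : σ → ℕ)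

noncomputable def psi : MvPolynomial σ ℝ →ₐ[ℝ] Polynomial (MvPolynomial σ ℝ) :=
  aeval (fun v => Polynomial.C (X v) * Polynomial.X ^ W v)

lemma psi_monomial {σ : Type*} [Fintype σ] (W : σ → ℕ) (d : σ →₀ ℕ) (r : ℝ) :
    psi W (monomial d r) =
      Polynomial.C (monomial d r) * Polynomial.X ^ (∑ v, d v * W v) := by
  rw [psi, aeval_monomial]
  have h1 : (d.prod fun v e => (Polynomial.C (X v : MvPolynomial σ ℝ) * Polynomial.X ^ W v) ^ e)
      = Polynomial.C (d.prod fun v e => (X v : MvPolynomial σ ℝ) ^ e) *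
        Polynomial.X ^ (∑ v ∈ d.support, d v * W v) := by
    rw [Finsupp.prod, Finsupp.prod, map_prod]
    rw [show (∏ v ∈ d.support, (Polynomial.C (X v : MvPolynomial σ ℝ) * Polynomial.X ^ W v) ^ d v)
        = ∏ v ∈ d.support, (Polynomial.C ((X v : MvPolynomial σ ℝ) ^ d v) *
          Polynomial.X ^ (d v * W v)) from Finset.prod_congr rfl fun v _ => by
            rw [mul_pow, ← pow_mul, ← Polynomial.C_pow, mul_comm (W v) (d v)]]
    rw [Finset.prod_mul_distrib, Finset.prod_pow_eq_pow_sum]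
  rw [h1]
  have h2 : (∑ v ∈ d.support, d v * W v) = ∑ v, d v * W v := by
    apply Finset.sum_subset (Finset.subset_univ _)
    intro v _ hv
    simp [Finsupp.notMem_support_iff.mp hv]
  rw [h2, monomial_eq]
  simp [Polynomial.algebraMap_apply, algebraMap_eq]
  ring

lemma psi_apply (f : MvPolynomial σ ℝ) :
    psi W f = ∑ d ∈ f.support,
      Polynomial.C (monomial d (f.coeff d)) * Polynomial.X ^ (∑ v, d v * W v) := by
  conv_lhs => rw [← support_sum_monomial_coeff f]
  rw [map_sum]
  exact Finset.sum_congr rfl fun d _ => psi_monomial W d _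

lemma psi_ne_zero {f : MvPolynomial σ ℝ} (hf : f ≠ 0) : psi W f ≠ 0 := by
  intro h
  apply hf
  have key : ((Polynomial.evalRingHom (1 : MvPolynomial σ ℝ)).comp
      ((psi W : MvPolynomial σ ℝ →ₐ[ℝ] Polynomial (MvPolynomial σ ℝ)) :
        MvPolynomial σ ℝ →+* Polynomial (MvPolynomial σ ℝ))) = RingHom.id _ := by
    apply MvPolynomial.ringHom_ext <;> intro x <;> simp [psi]
  have h2 := RingHom.congr_fun key f
  simp only [RingHom.comp_apply, RingHom.id_apply, AlgHom.coe_toRingHom] at h2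
  rw [← h2, h, map_zero]

lemma psi_coeff (f : MvPolynomial σ ℝ) (j : ℕ) (d : σ →₀ ℕ) :
    ((psi W f).coeff j).coeff d = if (∑ v, d v * W v) = j then f.coeff d else 0 := by
  classical
  rw [psi_apply, Polynomial.finset_sum_coeff]
  simp only [Polynomial.coeff_C_mul, Polynomial.coeff_X_pow, mul_ite, mul_one, mul_zero]
  rw [MvPolynomial.coeff_sum]
  by_cases hd : d ∈ f.support
  · rw [Finset.sum_eq_single d]
    · rw [apply_ite (coeff d)]
      split_ifs <;> simp_all [coeff_monomial]
    · intro b _ hb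
      rw [apply_ite (coeff d)]
      split_ifs <;> simp [coeff_monomial, hb]
    · intro h; exact absurd hd h
  · rw [Finset.sum_eq_zero]
    · simp [MvPolynomial.notMem_support_iff.mp hd]
    · intro b hb
      have hbd : b ≠ d := fun h => hd (h ▸ hb)
      rw [apply_ite (coeff d)]
      split_ifs <;> simp [coeff_monomial, hbd]

lemma psi_of_hom {f : MvPolynomial σ ℝ} {m : ℕ}
    (h : ∀ d ∈ f.support, (∑ v, d v * W v) = m) :
    psi W f = Polynomial.C f * Polynomial.X ^ m := by
  rw [psi_apply]
  conv_rhs => rw [← support_sum_monomial_coeff f]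
  rw [map_sum, Finset.sum_mul]
  exact Finset.sum_congr rfl fun d hd => by rw [h d hd]

lemma hom_of_psi {f : MvPolynomial σ ℝ} {m : ℕ}
    (h : ∀ j ≠ m, (psi W f).coeff j = 0) :
    ∀ d ∈ f.support, (∑ v, d v * W v) = m := by
  intro d hd
  by_contra hne
  have := psi_coeff W f (∑ v, d v * W v) d
  rw [if_pos rfl, h _ hne] at this
  simp only [MvPolynomial.coeff_zero] at this
  exact MvPolynomial.mem_support_iff.mp hd this.symm
end

lemma mdeg_apply {n K : ℕ} (grp : Fin n → Fin K) (d : Fin n →₀ ℕ) (k : Fin K) :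
    mdeg (fun v => Pi.single (grp v) (1 : ℤ)) d k
      = ((∑ v, d v * (if grp v = k then 1 else 0) : ℕ) : ℤ) := by
  rw [mdeg, Finset.sum_apply]
  push_cast
  apply Finset.sum_congr rfl
  intro v _
  rw [Pi.smul_apply, Pi.single_apply, smul_eq_mul]
  by_cases h : grp v = k
  · subst h; simp
  · simp [Ne.symm h, h]

/-- A factorization of a multihomogeneous polynomial of multidegree `(1,…,1)`
(with variables partitioned into groups `grp`) splits the variable groups into
two nonempty sets, each factor being multihomogeneous with degree the indicator
of its set of groups. -/
theorem stmt_17 {n K : ℕ} (grp : Fin n → Fin K) (u g₁ g₂ : MvPolynomial (Fin n) ℝ)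
    (hu : u ≠ 0) (hfact : u = g₁ * g₂)
    (hhom : IsMultiHom (fun v => Pi.single (grp v) (1 : ℤ)) u (fun _ => 1))
    (h₁ : g₁.totalDegree ≠ 0) (h₂ : g₂.totalDegree ≠ 0) :
    ∃ A : Finset (Fin K), A.Nonempty ∧ Aᶜ.Nonempty ∧
      IsMultiHom (fun v => Pi.single (grp v) (1 : ℤ)) g₁
        (fun k => if k ∈ A then 1 else 0) ∧
      IsMultiHom (fun v => Pi.single (grp v) (1 : ℤ)) g₂
        (fun k => if k ∈ A then 0 else 1) := by
  have hg₁ : g₁ ≠ 0 := fun h => hu (by rw [hfact, h, zero_mul])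
  have hg₂ : g₂ ≠ 0 := fun h => hu (by rw [hfact, h, mul_zero])
  set W : Fin K → Fin n → ℕ := fun k v => if grp v = k then 1 else 0 with hW
  -- the weighted degrees of u are all 1
  have huhom : ∀ k : Fin K, ∀ d ∈ u.support, (∑ v, d v * W k v) = 1 := by
    intro k d hd
    have := congrFun (hhom d hd) k
    rw [mdeg_apply] at this
    exact_mod_cast this
  -- the product identity
  have hpq : ∀ k : Fin K, psi (W k) g₁ * psi (W k) g₂ = Polynomial.C u * Polynomial.X := by
    intro k
    rw [← map_mul, ← hfact, psi_of_hom (W k) (huhom k), pow_one]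
  set m₁ : Fin K → ℕ := fun k => (psi (W k) g₁).natDegree with hm₁
  set m₂ : Fin K → ℕ := fun k => (psi (W k) g₂).natDegree with hm₂
  have hdeg : ∀ k, m₁ k + m₂ k = 1 := by
    intro k
    rw [hm₁, hm₂]
    rw [← Polynomial.natDegree_mul (psi_ne_zero (W k) hg₁) (psi_ne_zero (W k) hg₂), hpq k,
      Polynomial.natDegree_C_mul_X u hu]
  have htr : ∀ k, (psi (W k) g₁).natTrailingDegree = m₁ k ∧
      (psi (W k) g₂).natTrailingDegree = m₂ k := by
    intro k
    have h1 := Polynomial.natTrailingDegree_le_natDegree (psi (W k) g₁)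
    have h2 := Polynomial.natTrailingDegree_le_natDegree (psi (W k) g₂)
    have h3 : (psi (W k) g₁).natTrailingDegree + (psi (W k) g₂).natTrailingDegree = 1 := by
      rw [← Polynomial.natTrailingDegree_mul (psi_ne_zero (W k) hg₁) (psi_ne_zero (W k) hg₂),
        hpq k, Polynomial.natTrailingDegree_mul (Polynomial.C_ne_zero.mpr hu) Polynomial.X_ne_zero,
        Polynomial.natTrailingDegree_C, Polynomial.natTrailingDegree_X]
    have e1 : (psi (W k) g₁).natDegree = m₁ k := rfl
    have e2 : (psi (W k) g₂).natDegree = m₂ k := rfl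
    have := hdeg k
    omega
  -- each factor is weighted-homogeneous
  have hom₁ : ∀ k, ∀ d ∈ g₁.support, (∑ v, d v * W k v) = m₁ k := by
    intro k
    apply hom_of_psi
    intro j hj
    rcases lt_or_gt_of_ne hj with h | h
    · exact Polynomial.coeff_eq_zero_of_lt_natTrailingDegree (by rw [(htr k).1]; exact h)
    · exact Polynomial.coeff_eq_zero_of_natDegree_lt h
  have hom₂ : ∀ k, ∀ d ∈ g₂.support, (∑ v, d v * W k v) = m₂ k := by
    intro k
    apply hom_of_psi
    intro j hj
    rcases lt_or_gt_of_ne hj with h | h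
    · exact Polynomial.coeff_eq_zero_of_lt_natTrailingDegree (by rw [(htr k).2]; exact h)
    · exact Polynomial.coeff_eq_zero_of_natDegree_lt h
  refine ⟨Finset.univ.filter (fun k => m₁ k = 1), ?_, ?_, ?_, ?_⟩
  · -- A nonempty
    obtain ⟨d, hd, v, hv⟩ : ∃ d ∈ g₁.support, ∃ v, d v ≠ 0 := by
      by_contra h
      push_neg at h
      apply h₁
      rw [MvPolynomial.totalDegree_eq_zero_iff]
      exact h
    refine ⟨grp v, Finset.mem_filter.mpr ⟨Finset.mem_univ _, ?_⟩⟩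
    have h1 := hom₁ (grp v) d hd
    have h2 : d v * W (grp v) v ≤ ∑ v', d v' * W (grp v) v' :=
      Finset.single_le_sum (f := fun v' => d v' * W (grp v) v') (fun i _ => Nat.zero_le _)
        (Finset.mem_univ v)
    have h3 : W (grp v) v = 1 := by simp [hW]
    rw [h3, mul_one] at h2
    have := hdeg (grp v)
    omega
  · -- Aᶜ nonempty
    obtain ⟨d, hd, v, hv⟩ : ∃ d ∈ g₂.support, ∃ v, d v ≠ 0 := by
      by_contra h
      push_neg at h
      apply h₂
      rw [MvPolynomial.totalDegree_eq_zero_iff]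
      exact h
    refine ⟨grp v, Finset.mem_compl.mpr ?_⟩
    intro hmem
    have h1 := hom₂ (grp v) d hd
    have h2 : d v * W (grp v) v ≤ ∑ v', d v' * W (grp v) v' :=
      Finset.single_le_sum (f := fun v' => d v' * W (grp v) v') (fun i _ => Nat.zero_le _)
        (Finset.mem_univ v)
    have h3 : W (grp v) v = 1 := by simp [hW]
    rw [h3, mul_one] at h2
    have h3 := (Finset.mem_filter.mp hmem).2
    have := hdeg (grp v)
    omega
  · intro d hd
    funext k
    rw [mdeg_apply, hom₁ k d hd]
    by_cases hk : k ∈ Finset.univ.filter (fun k => m₁ k = 1)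
    · rw [if_pos hk, (Finset.mem_filter.mp hk).2]; norm_num
    · rw [if_neg hk]
      have : m₁ k ≠ 1 := fun h => hk (Finset.mem_filter.mpr ⟨Finset.mem_univ _, h⟩)
      have := hdeg k
      have : m₁ k = 0 := by omega
      rw [this]; norm_num
  · intro d hd
    funext k
    rw [mdeg_apply, hom₂ k d hd]
    by_cases hk : k ∈ Finset.univ.filter (fun k => m₁ k = 1)
    · rw [if_pos hk]
      have h3 := (Finset.mem_filter.mp hk).2
      have := hdeg k
      have : m₂ k = 0 := by omega
      rw [this]; norm_num
    · rw [if_neg hk]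
      have : m₁ k ≠ 1 := fun h => hk (Finset.mem_filter.mpr ⟨Finset.mem_univ _, h⟩)
      have := hdeg k
      have : m₂ k = 1 := by omega
      rw [this]; norm_num
end
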